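/- arXiv:2011.06377 — 2 statements merged into one kernel-verified Lean document; each statement's English description precedes it below -/
import Mathlib

section
/- For each t ∈ (0,1), the map φ_t : G → R given by φ_t((x_n)_n) = Σ_{n∈Z} (t/(1−t))^n · x_n(t) is a group homomorphism satisfying φ_t ∘ γ_* = φ_t (i.e. it is γ_*-invariant), and if t ∈ F it is positive on G^+. -/
open scoped BigOperators

noncomputable section

/-- The open interval `(0,1)` on which the functions of `G₀ = ℤ[t,t⁻¹,(1-t)⁻¹]` live. -/
def I01 : Set ℝ := Set.Ioo 0 1

/-- Membership in `G₀ = ℤ[t,t⁻¹,(1-t)⁻¹]`, viewed as continuous functions on `(0,1)`: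
`f ∈ G₀` iff `f(t) = p(t)/(tᵐ(1-t)ⁿ)` for some integer polynomial `p`. -/
def memG0 (f : I01 → ℝ) : Prop :=
  ∃ (p : Polynomial ℤ) (m n : ℕ),
    ∀ t : I01, f t = (Polynomial.aeval (t : ℝ) p) / ((t : ℝ) ^ m * (1 - (t : ℝ)) ^ n)

/-- The positive cone `G_F⁺ = {f ∈ G₀ : f > 0 on F} ∪ {0}`. -/
def memGFp (F : Set ℝ) (f : I01 → ℝ) : Prop :=
  memG0 f ∧ ((∀ t : I01, (t : ℝ) ∈ F → 0 < f t) ∨ f = 0)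

/-- Membership in `G = ⊕_{n ∈ ℤ} G₀` (finitely supported sequences of elements of `G₀`). -/
def memG (x : ℤ → I01 → ℝ) : Prop :=
  (∀ n : ℤ, memG0 (x n)) ∧ {n : ℤ | x n ≠ 0}.Finite

/-- `Σ_{n ∈ ℤ} αⁿ(xₙ)(t)`, where `α` is multiplication by `t/(1-t)`. -/
def sumAlpha (x : ℤ → I01 → ℝ) (t : I01) : ℝ :=
  ∑ᶠ n : ℤ, ((t : ℝ) / (1 - (t : ℝ))) ^ n * x n t

/-- `Σ_{n ∈ ℤ} xₙ(t)`. -/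
def sumPlain (x : ℤ → I01 → ℝ) (t : I01) : ℝ := ∑ᶠ n : ℤ, x n t

/-- The automorphism `γ₊ : G → G`, `γ₊((xₙ)ₙ) = (α(x_{n+1}))ₙ`. -/
def gammaStar (x : ℤ → I01 → ℝ) : ℤ → I01 → ℝ :=
  fun n t => ((t : ℝ) / (1 - (t : ℝ))) * x (n + 1) t

/-- The positive cone `G⁺` of `G` determined by `F` and `F₁`. -/
def memGplus (F F1 : Set ℝ) (x : ℤ → I01 → ℝ) : Prop :=
  memG x ∧
    (((∀ t : I01, (t : ℝ) ∈ F → 0 < sumAlpha x t) ∧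
      (∀ t : I01, (t : ℝ) ∈ F1 → 0 < sumPlain x t)) ∨ x = 0)

/-- The cone `G⁺⁺ = {0} ∪ {x ∈ G : Σₙ αⁿ(xₙ) > 0 on F}`. -/
def memGpp (F : Set ℝ) (x : ℤ → I01 → ℝ) : Prop :=
  memG x ∧ ((∀ t : I01, (t : ℝ) ∈ F → 0 < sumAlpha x t) ∨ x = 0)

/-- The sequence in `G` supported at `n = 0` with value `a`. -/
def delta0 (a : I01 → ℝ) : ℤ → I01 → ℝ := fun n => if n = 0 then a else 0

/-! Additivity holds because elements of `G` have finite support, so `φₜ` is a finite sum;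
`γ₊`-invariance is a reindexing `n ↦ n + 1` of the sum, since `α` contributes exactly one more
factor `t/(1-t)`; positivity on `G⁺` is built into the definition of `G⁺`. -/

theorem finsum_zpow_mul_shift {K : Type*} [DivisionRing K] {r : K} (hr : r ≠ 0) (f : ℤ → K) :
    ∑ᶠ n : ℤ, r ^ n * (r * f (n + 1)) = ∑ᶠ n : ℤ, r ^ n * f n := by
  simp_rw [← mul_assoc, ← zpow_add_one₀ hr]
  exact finsum_comp_equiv (Equiv.addRight 1) (f := fun n : ℤ => r ^ n * f n)

theorem I01.div_one_sub_ne_zero (t : I01) : (t : ℝ) / (1 - t) ≠ 0 :=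
  div_ne_zero t.2.1.ne' (sub_ne_zero.2 t.2.2.ne')

theorem memG.finite_support_mul {x : ℤ → I01 → ℝ} (hx : memG x) (c : ℤ → ℝ) (t : I01) :
    (Function.support fun n : ℤ => c n * x n t).Finite :=
  hx.2.subset fun n hn hxn => hn (by simp [show x n = 0 from hxn])

theorem sumAlpha_add {x y : ℤ → I01 → ℝ} (hx : memG x) (hy : memG y) (t : I01) :
    sumAlpha (x + y) t = sumAlpha x t + sumAlpha y t := by
  simp only [sumAlpha, Pi.add_apply, mul_add]
  exact finsum_add_distrib (hx.finite_support_mul _ t) (hy.finite_support_mul _ t)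

theorem sumAlpha_gammaStar (x : ℤ → I01 → ℝ) (t : I01) :
    sumAlpha (gammaStar x) t = sumAlpha x t :=
  finsum_zpow_mul_shift (I01.div_one_sub_ne_zero t) (x · t)

theorem sumAlpha_zero (t : I01) : sumAlpha 0 t = 0 := by
  simp [sumAlpha]

theorem memGplus.sumAlpha_nonneg {F F1 : Set ℝ} {x : ℤ → I01 → ℝ} (hx : memGplus F F1 x)
    {t : I01} (ht : (t : ℝ) ∈ F) : 0 ≤ sumAlpha x t := by
  rcases hx.2 with ⟨hpos, -⟩ | rfl
  · exact (hpos t ht).le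
  · exact (sumAlpha_zero t).ge

theorem stmt11_general (F : Set ℝ) (F1 : Set ℝ) :
    ∀ t : I01,
      (∀ x y : ℤ → I01 → ℝ, memG x → memG y →
        sumAlpha (x + y) t = sumAlpha x t + sumAlpha y t) ∧
      (∀ x : ℤ → I01 → ℝ, memG x → sumAlpha (gammaStar x) t = sumAlpha x t) ∧
      ((t : ℝ) ∈ F → ∀ x : ℤ → I01 → ℝ, memGplus F F1 x → 0 ≤ sumAlpha x t) := fun t =>
  ⟨fun _ _ hx hy => sumAlpha_add hx hy t, fun x _ => sumAlpha_gammaStar x t,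
    fun ht _ hx => hx.sumAlpha_nonneg ht⟩

/-- for `t ∈ (0,1)` the map `φₜ(x) = Σₙ (t/(1-t))ⁿ xₙ(t)` is an additive,
`γ₊`-invariant map on `G`, positive on `G⁺` when `t ∈ F`. -/
theorem stmt11 (F : Set ℝ) (hFne : F.Nonempty) (hFc : IsClosed F)
    (hFsub : F ⊆ Set.Icc 0 1) (hF0 : (0:ℝ) ∉ F) (hF1 : (1:ℝ) ∉ F)
    (F1 : Set ℝ) (hF1c : IsClosed F1)
    (hF1sub : F1 ⊆ Set.Icc 0 1) (hF10 : (0:ℝ) ∉ F1) (hF11 : (1:ℝ) ∉ F1) :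
    ∀ t : I01,
      (∀ x y : ℤ → I01 → ℝ, memG x → memG y →
        sumAlpha (x + y) t = sumAlpha x t + sumAlpha y t) ∧
      (∀ x : ℤ → I01 → ℝ, memG x → sumAlpha (gammaStar x) t = sumAlpha x t) ∧
      ((t : ℝ) ∈ F → ∀ x : ℤ → I01 → ℝ, memGplus F F1 x → 0 ≤ sumAlpha x t) :=
  stmt11_general F F1
end
end

section
/- Let G^{++} = {0} ∪ {x ∈ G : Σ_n α^n(x_n)(t) > 0 for all t ∈ F}. Then G^{++}/(id − γ_*)(G) = G^+/(id − γ_*)(G) in G/(id − γ_*)(G); that is, every element of G^{++} differs from an element of G^+ by an element of (id − γ_*)(G). -/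
open scoped BigOperators

noncomputable section

/-!
Write `S = Σₙ αⁿ xₙ`. The map `x ↦ Σₙ αⁿ xₙ` is invariant under `γ₊`, and its kernel is exactly
`(id - γ₊)(G)`: a sequence `c` with `Σₙ αⁿ cₙ = 0` is `z - γ₊ z` for the tail sums
`zₙ = Σ_{k ≥ n} α^(k-n) cₖ`. Hence `x ≡ δ₀(S)`. For `g ∈ G₀`, the element
`y = δ₀(S) - (id - γ₊)(δ₀ g)` still has `Σ αⁿ yₙ = S > 0` on `F`, while `Σ yₙ = S + (α - 1) g`.
Taking `g = N (α - 1)` adds `N (α - 1)²`, which vanishes only at `t = 1/2`, and if `1/2 ∈ F₁` then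
`1/2 ∈ F`, so `S(1/2) > 0`. By compactness of `F₁ ⊂ (0,1)` one `N` makes `Σ yₙ > 0` on all of `F₁`.
-/

section Telescope

variable {K : Type*} [Field K]

def tailSum (r : K) (T : Finset ℤ) (c : ℤ → K) (n : ℤ) : K :=
  ∑ k ∈ T with n ≤ k, r ^ (k - n) * c k

lemma tailSum_sub_mul_tailSum_add_one {r : K} (hr : r ≠ 0) {T : Finset ℤ} {c : ℤ → K}
    (hc : ∀ n ∉ T, c n = 0) (n : ℤ) :
    tailSum r T c n - r * tailSum r T c (n + 1) = c n := by
  have hterm : ∀ k, ((if n ≤ k then r ^ (k - n) * c k else 0)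
      - r * if n + 1 ≤ k then r ^ (k - (n + 1)) * c k else 0) = if n = k then c k else 0 := by
    intro k
    rcases lt_trichotomy k n with hk | rfl | hk
    · simp [not_le.2 hk, not_le.2 (hk.trans (lt_add_one n)), hk.ne']
    · simp
    · have hsucc : k - n = k - (n + 1) + 1 := by ring
      simp only [hk.le, Int.add_one_le_iff.2 hk, hk.ne, if_true, if_false, hsucc,
        zpow_add_one₀ hr]
      ring
  simp only [tailSum, Finset.sum_filter, Finset.mul_sum, ← Finset.sum_sub_distrib, hterm,
    Finset.sum_ite_eq]
  split_ifs with h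
  · rfl
  · exact (hc n h).symm

lemma tailSum_eq_zero_of_forall_lt (r : K) {T : Finset ℤ} (c : ℤ → K) {n : ℤ}
    (h : ∀ k ∈ T, k < n) : tailSum r T c n = 0 := by
  rw [tailSum, Finset.filter_false_of_mem fun k hk => not_le.2 (h k hk), Finset.sum_empty]

lemma tailSum_eq_of_forall_le {r : K} (hr : r ≠ 0) {T : Finset ℤ} (c : ℤ → K) {n : ℤ}
    (h : ∀ k ∈ T, n ≤ k) : tailSum r T c n = r ^ (-n) * ∑ k ∈ T, r ^ k * c k := by
  rw [tailSum, Finset.filter_true_of_mem h, Finset.mul_sum]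
  refine Finset.sum_congr rfl fun k _ => ?_
  rw [← mul_assoc, ← zpow_add₀ hr, neg_add_eq_sub]

end Telescope

lemma IsCompact.exists_nat_forall_pos_add_mul {X : Type*} [TopologicalSpace X] {K : Set X}
    (hK : IsCompact K) {f q : X → ℝ} (hf : Continuous f) (hq : Continuous q)
    (hq0 : ∀ x, 0 ≤ q x) (hfq : ∀ x ∈ K, f x ≤ 0 → 0 < q x) :
    ∃ N : ℕ, ∀ x ∈ K, 0 < f x + N * q x := by
  refine hK.elim_directed_cover (fun N : ℕ => {x | 0 < f x + N * q x})
    (fun N => isOpen_lt continuous_const (hf.add (continuous_const.mul hq))) (fun x hx => ?_)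
    (Monotone.directed_le fun M N hMN x hx => ?_)
  · rw [Set.mem_iUnion]
    by_cases hfx : 0 < f x
    · exact ⟨0, by simpa using hfx⟩
    · have hqx := hfq x hx (not_lt.1 hfx)
      obtain ⟨N, hN⟩ := exists_nat_gt (-f x / q x)
      rw [div_lt_iff₀ hqx] at hN
      exact ⟨N, show 0 < f x + N * q x by linarith⟩
  · have hMN' : (M : ℝ) ≤ N := Nat.cast_le.2 hMN
    have hx' : 0 < f x + M * q x := hx
    show 0 < f x + N * q x
    nlinarith [hq0 x]

namespace GammaQuotient

def alpha (t : I01) : ℝ := t / (1 - t)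

lemma alpha_pos (t : I01) : 0 < alpha t :=
  div_pos t.2.1 (sub_pos.2 t.2.2)

lemma alpha_ne_one {t : I01} (ht : (t : ℝ) ≠ 1 / 2) : alpha t ≠ 1 := by
  have h1t : 1 - (t : ℝ) ≠ 0 := (sub_pos.2 t.2.2).ne'
  rw [alpha, Ne, div_eq_one_iff_eq h1t]
  contrapose! ht
  linarith

lemma sumAlpha_eq (x : ℤ → I01 → ℝ) (t : I01) :
    sumAlpha x t = ∑ᶠ n : ℤ, alpha t ^ n * x n t := rfl

lemma gammaStar_apply (x : ℤ → I01 → ℝ) (n : ℤ) (t : I01) :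
    gammaStar x n t = alpha t * x (n + 1) t := rfl

lemma gammaStar_add (x y : ℤ → I01 → ℝ) : gammaStar (x + y) = gammaStar x + gammaStar y := by
  funext n t
  simp only [gammaStar_apply, Pi.add_apply, mul_add]

lemma gammaStar_zero : gammaStar 0 = 0 := by
  funext n t
  simp [gammaStar_apply]

def G₀ : Subring (I01 → ℝ) where
  carrier := {f | memG0 f}
  zero_mem' := ⟨0, 0, 0, fun _ => by simp⟩
  one_mem' := ⟨1, 0, 0, fun _ => by simp⟩
  neg_mem' := by
    rintro f ⟨p, m, n, hp⟩
    exact ⟨-p, m, n, fun t => by simp [hp t, neg_div]⟩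
  add_mem' := by
    rintro f g ⟨p, m, n, hp⟩ ⟨q, m', n', hq⟩
    refine ⟨p * (.X ^ m' * (1 - .X) ^ n') + q * (.X ^ m * (1 - .X) ^ n), m + m', n + n',
      fun t => ?_⟩
    have ht : (t : ℝ) ≠ 0 := t.2.1.ne'
    have h1t : 1 - (t : ℝ) ≠ 0 := (sub_pos.2 t.2.2).ne'
    simp only [Pi.add_apply, hp, hq, map_add, map_mul, map_pow, map_sub, map_one,
      Polynomial.aeval_X]
    field_simp
    ring
  mul_mem' := by
    rintro f g ⟨p, m, n, hp⟩ ⟨q, m', n', hq⟩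
    refine ⟨p * q, m + m', n + n', fun t => ?_⟩
    have ht : (t : ℝ) ≠ 0 := t.2.1.ne'
    have h1t : 1 - (t : ℝ) ≠ 0 := (sub_pos.2 t.2.2).ne'
    simp only [Pi.mul_apply, hp, hq, map_mul]
    field_simp
    ring

lemma alpha_zpow_mem (k : ℤ) : (fun t => alpha t ^ k) ∈ G₀ := by
  rcases k with k | k
  · exact ⟨.X ^ k, 0, k, fun t => by simp [alpha, div_pow]⟩
  · refine ⟨(1 - .X) ^ (k + 1), k + 1, 0, fun t => ?_⟩
    simp [alpha, zpow_negSucc, div_pow]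

lemma alpha_mem : alpha ∈ G₀ := by
  simpa using alpha_zpow_mem 1

lemma continuous_of_mem_G₀ {f : I01 → ℝ} (hf : f ∈ G₀) : Continuous f := by
  obtain ⟨p, m, n, hp⟩ := hf
  rw [funext hp]
  refine (p.continuous_aeval.comp continuous_subtype_val).div
    ((continuous_subtype_val.pow m).mul ((continuous_const.sub continuous_subtype_val).pow n))
    fun t => ?_
  exact mul_ne_zero (pow_ne_zero _ t.2.1.ne') (pow_ne_zero _ (sub_pos.2 t.2.2).ne')

def G : AddSubgroup (ℤ → I01 → ℝ) where
  carrier := {x | memG x}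
  zero_mem' := ⟨fun _ => G₀.zero_mem, by simp⟩
  neg_mem' := by
    rintro x ⟨hx, hfin⟩
    exact ⟨fun n => G₀.neg_mem (hx n), by simpa using hfin⟩
  add_mem' := by
    rintro x y ⟨hx, hxfin⟩ ⟨hy, hyfin⟩
    refine ⟨fun n => G₀.add_mem (hx n) (hy n), (hxfin.union hyfin).subset fun n hn => ?_⟩
    by_contra h
    simp_all

lemma delta0_mem {a : I01 → ℝ} (ha : a ∈ G₀) : delta0 a ∈ G := by
  refine ⟨fun n => ?_, (Set.finite_singleton 0).subset fun n hn => ?_⟩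
  · show delta0 a n ∈ G₀
    unfold delta0
    split_ifs
    exacts [ha, G₀.zero_mem]
  · by_contra h
    simp_all [delta0]

lemma support_alpha_zpow_mul_subset (x : ℤ → I01 → ℝ) (t : I01) :
    (Function.support fun n => alpha t ^ n * x n t) ⊆ {n | x n ≠ 0} := by
  intro n hn h
  simp_all

lemma sumAlpha_eq_sum {x : ℤ → I01 → ℝ} {T : Finset ℤ} (hT : ∀ n ∉ T, x n = 0) (t : I01) :
    sumAlpha x t = ∑ n ∈ T, alpha t ^ n * x n t := by
  refine finsum_eq_sum_of_support_subset _ fun n hn => ?_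
  by_contra h
  simp_all

lemma sumAlpha_mem {x : ℤ → I01 → ℝ} (hx : x ∈ G) : sumAlpha x ∈ G₀ := by
  have hT : ∀ n ∉ hx.2.toFinset, x n = 0 := by simp
  convert G₀.sum_mem (t := hx.2.toFinset) fun n _ => G₀.mul_mem (alpha_zpow_mem n) (hx.1 n)
    using 1
  funext t
  simp [sumAlpha_eq_sum hT]

lemma sumAlpha_sub {x y : ℤ → I01 → ℝ} (hx : x ∈ G) (hy : y ∈ G) (t : I01) :
    sumAlpha (x - y) t = sumAlpha x t - sumAlpha y t := by
  simp only [sumAlpha_eq, Pi.sub_apply, mul_sub]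
  exact finsum_sub_distrib ((hx.2).subset (support_alpha_zpow_mul_subset x t))
    ((hy.2).subset (support_alpha_zpow_mul_subset y t))

lemma sumPlain_sub {x y : ℤ → I01 → ℝ} (hx : x ∈ G) (hy : y ∈ G) (t : I01) :
    sumPlain (x - y) t = sumPlain x t - sumPlain y t := by
  refine finsum_sub_distrib ((hx.2).subset fun n hn h => ?_) ((hy.2).subset fun n hn h => ?_)
  all_goals simp_all

lemma sumAlpha_delta0 (a : I01 → ℝ) (t : I01) : sumAlpha (delta0 a) t = a t := by
  rw [sumAlpha_eq, finsum_eq_single _ 0 fun n hn => by simp [delta0, hn]]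
  simp [delta0]

lemma sumPlain_delta0 (a : I01 → ℝ) (t : I01) : sumPlain (delta0 a) t = a t := by
  rw [sumPlain, finsum_eq_single _ 0 fun n hn => by simp [delta0, hn]]
  simp [delta0]

lemma sumAlpha_gammaStar (x : ℤ → I01 → ℝ) (t : I01) :
    sumAlpha (gammaStar x) t = sumAlpha x t := by
  have hα : alpha t ≠ 0 := (alpha_pos t).ne'
  simp only [sumAlpha_eq, gammaStar_apply, ← mul_assoc, ← zpow_add_one₀ hα]
  exact finsum_comp_equiv (Equiv.addRight (1 : ℤ)) (f := fun n => alpha t ^ n * x n t)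

lemma sumPlain_gammaStar (x : ℤ → I01 → ℝ) (t : I01) :
    sumPlain (gammaStar x) t = alpha t * sumPlain x t := by
  rw [sumPlain, sumPlain, mul_finsum]
  exact finsum_comp_equiv (Equiv.addRight (1 : ℤ)) (f := fun n => alpha t * x n t)

lemma gammaStar_mem {x : ℤ → I01 → ℝ} (hx : x ∈ G) : gammaStar x ∈ G := by
  refine ⟨fun n => G₀.mul_mem alpha_mem (hx.1 (n + 1)), ?_⟩
  refine ((hx.2).preimage (add_left_injective 1).injOn).subset fun n hn h => hn ?_
  funext t
  simp [gammaStar_apply, show x (n + 1) = 0 from h]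

lemma exists_eq_sub_gammaStar_of_sumAlpha_eq_zero {c : ℤ → I01 → ℝ} (hc : c ∈ G)
    (h0 : ∀ t, sumAlpha c t = 0) : ∃ z ∈ G, c = z - gammaStar z := by
  obtain ⟨a, ha⟩ := hc.2.bddBelow
  obtain ⟨b, hb⟩ := hc.2.bddAbove
  set T := Finset.Icc a b
  have hT : ∀ n ∉ T, c n = 0 := fun n hn => by
    by_contra h
    exact hn (Finset.mem_Icc.2 ⟨ha h, hb h⟩)
  let z : ℤ → I01 → ℝ := fun n t => tailSum (alpha t) T (fun k => c k t) n
  have hz_out : ∀ n ∉ T, z n = 0 := by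
    intro n hn
    funext t
    rw [Finset.mem_Icc, not_and_or, not_le, not_le] at hn
    show tailSum (alpha t) T (fun k => c k t) n = 0
    rcases hn with hn | hn
    · rw [tailSum_eq_of_forall_le (alpha_pos t).ne' _ fun k hk => (hn.trans_le
        (Finset.mem_Icc.1 hk).1).le, ← sumAlpha_eq_sum hT, h0, mul_zero]
    · exact tailSum_eq_zero_of_forall_lt _ _ fun k hk => (Finset.mem_Icc.1 hk).2.trans_lt hn
  refine ⟨z, ⟨fun n => ?_, T.finite_toSet.subset fun n hn => ?_⟩, ?_⟩
  · show z n ∈ G₀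
    convert G₀.sum_mem (t := T.filter (n ≤ ·))
      (fun k _ => G₀.mul_mem (alpha_zpow_mem (k - n)) (hc.1 k)) using 1
    funext t
    simp [z, tailSum, Finset.sum_apply]
  · by_contra h
    exact hn (hz_out n h)
  · funext n t
    exact (tailSum_sub_mul_tailSum_add_one (alpha_pos t).ne'
      (fun k hk => congrFun (hT k hk) t) n).symm

lemma exists_sub_delta0_sumAlpha_eq_sub_gammaStar {x : ℤ → I01 → ℝ} (hx : x ∈ G) :
    ∃ z ∈ G, x - delta0 (sumAlpha x) = z - gammaStar z := by
  have hd := delta0_mem (sumAlpha_mem hx)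
  refine exists_eq_sub_gammaStar_of_sumAlpha_eq_zero (G.sub_mem hx hd) fun t => ?_
  rw [sumAlpha_sub hx hd, sumAlpha_delta0, sub_self]

lemma sumAlpha_sub_gammaStar {w : ℤ → I01 → ℝ} (hw : w ∈ G) (t : I01) :
    sumAlpha (w - gammaStar w) t = 0 := by
  rw [sumAlpha_sub hw (gammaStar_mem hw), sumAlpha_gammaStar, sub_self]

lemma sumPlain_sub_gammaStar {w : ℤ → I01 → ℝ} (hw : w ∈ G) (t : I01) :
    sumPlain (w - gammaStar w) t = (1 - alpha t) * sumPlain w t := by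
  rw [sumPlain_sub hw (gammaStar_mem hw), sumPlain_gammaStar, sub_mul, one_mul]

lemma sub_gammaStar_add_sub_gammaStar (z w : ℤ → I01 → ℝ) :
    z - gammaStar z + (w - gammaStar w) = z + w - gammaStar (z + w) := by
  rw [gammaStar_add]
  abel

lemma exists_sumAlpha_eq_and_sumPlain_eq {S g : I01 → ℝ} (hS : S ∈ G₀) (hg : g ∈ G₀) :
    ∃ y ∈ G, (∀ t, sumAlpha y t = S t) ∧ (∀ t, sumPlain y t = S t + (alpha t - 1) * g t) ∧
      ∃ w ∈ G, delta0 S - y = w - gammaStar w := by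
  have hd := delta0_mem hS
  have hw := delta0_mem hg
  have hsw := G.sub_mem hw (gammaStar_mem hw)
  refine ⟨delta0 S - (delta0 g - gammaStar (delta0 g)), G.sub_mem hd hsw, fun t => ?_,
    fun t => ?_, delta0 g, hw, sub_sub_cancel _ _⟩
  · rw [sumAlpha_sub hd hsw, sumAlpha_delta0, sumAlpha_sub_gammaStar hw, sub_zero]
  · rw [sumPlain_sub hd hsw, sumPlain_delta0, sumPlain_sub_gammaStar hw, sumPlain_delta0]
    ring

lemma isCompact_preimage_val {A : Set ℝ} (hAc : IsClosed A) (hA : A ⊆ Set.Icc 0 1)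
    (h0 : (0 : ℝ) ∉ A) (h1 : (1 : ℝ) ∉ A) : IsCompact (Subtype.val ⁻¹' A : Set I01) := by
  refine Topology.IsInducing.subtypeVal.isCompact_preimage'
    (isCompact_Icc.of_isClosed_subset hAc hA) fun a ha => ?_
  rw [Subtype.range_coe]
  exact ⟨(hA ha).1.lt_of_ne fun h => h0 (h ▸ ha), (hA ha).2.lt_of_ne fun h => h1 (h ▸ ha)⟩

lemma exists_nat_forall_pos_add_mul_sq {F F1 : Set ℝ} (hF1c : IsClosed F1)
    (hF1sub : F1 ⊆ Set.Icc 0 1) (hF10 : (0 : ℝ) ∉ F1) (hF11 : (1 : ℝ) ∉ F1)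
    (hhalf : (1 / 2 : ℝ) ∉ F ∪ F1 ∨ (1 / 2 : ℝ) ∈ F ∩ F1) {S : I01 → ℝ} (hS : S ∈ G₀)
    (hpos : ∀ t : I01, (t : ℝ) ∈ F → 0 < S t) :
    ∃ N : ℕ, ∀ t : I01, (t : ℝ) ∈ F1 → 0 < S t + N * (alpha t - 1) ^ 2 := by
  refine (isCompact_preimage_val hF1c hF1sub hF10 hF11).exists_nat_forall_pos_add_mul
    (continuous_of_mem_G₀ hS) (((continuous_of_mem_G₀ alpha_mem).sub continuous_const).pow 2)
    (fun t => sq_nonneg _) fun t ht hSt => ?_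
  refine sq_pos_of_ne_zero (sub_ne_zero.2 (alpha_ne_one fun h => ?_))
  rcases hhalf with h' | h'
  · exact h' (Or.inr (h ▸ ht))
  · exact (hpos t (h ▸ h'.1)).not_ge hSt

end GammaQuotient

open GammaQuotient in
theorem stmt15_general (F : Set ℝ)
    (F1 : Set ℝ) (hF1c : IsClosed F1)
    (hF1sub : F1 ⊆ Set.Icc 0 1) (hF10 : (0:ℝ) ∉ F1) (hF11 : (1:ℝ) ∉ F1)
    (hhalf : ((1/2 : ℝ) ∉ F ∪ F1) ∨ ((1/2 : ℝ) ∈ F ∩ F1)) :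
    (∀ x : ℤ → I01 → ℝ, memGpp F x →
      ∃ y : ℤ → I01 → ℝ, memGplus F F1 y ∧
        ∃ z : ℤ → I01 → ℝ, memG z ∧ x - y = z - gammaStar z) ∧
    (∀ y : ℤ → I01 → ℝ, memGplus F F1 y → memGpp F y) := by
  refine ⟨?_, fun y hy => ⟨hy.1, hy.2.imp_left And.left⟩⟩
  rintro x ⟨hx, hpos | rfl⟩
  swap
  · exact ⟨0, ⟨G.zero_mem, Or.inr rfl⟩, 0, G.zero_mem, by rw [gammaStar_zero]⟩
  have hS := sumAlpha_mem hx
  obtain ⟨N, hN⟩ := exists_nat_forall_pos_add_mul_sq hF1c hF1sub hF10 hF11 hhalf hS hpos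
  obtain ⟨y, hy, hyα, hyP, w, hw, hyw⟩ := exists_sumAlpha_eq_and_sumPlain_eq hS
    (g := fun t => N * (alpha t - 1)) (G₀.mul_mem (natCast_mem G₀ N) (G₀.sub_mem alpha_mem G₀.one_mem))
  obtain ⟨z, hz, hxz⟩ := exists_sub_delta0_sumAlpha_eq_sub_gammaStar hx
  refine ⟨y, ⟨hy, Or.inl ⟨fun t ht => hyα t ▸ hpos t ht, fun t ht => ?_⟩⟩, z + w,
    G.add_mem hz hw, ?_⟩
  · rw [hyP]
    linarith [hN t ht]
  · rw [← sub_add_sub_cancel x (delta0 (sumAlpha x)) y, hxz, hyw,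
      sub_gammaStar_add_sub_gammaStar]

/-- `G⁺⁺` and `G⁺` have the same image in `G/(id - γ₊)(G)`: every element of
`G⁺⁺` differs from an element of `G⁺` by an element of `(id - γ₊)(G)` (and conversely). -/
theorem stmt15 (F : Set ℝ) (hFne : F.Nonempty) (hFc : IsClosed F)
    (hFsub : F ⊆ Set.Icc 0 1) (hF0 : (0:ℝ) ∉ F) (hF1 : (1:ℝ) ∉ F)
    (F1 : Set ℝ) (hF1c : IsClosed F1)
    (hF1sub : F1 ⊆ Set.Icc 0 1) (hF10 : (0:ℝ) ∉ F1) (hF11 : (1:ℝ) ∉ F1)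
    (hhalf : ((1/2 : ℝ) ∉ F ∪ F1) ∨ ((1/2 : ℝ) ∈ F ∩ F1)) :
    (∀ x : ℤ → I01 → ℝ, memGpp F x →
      ∃ y : ℤ → I01 → ℝ, memGplus F F1 y ∧
        ∃ z : ℤ → I01 → ℝ, memG z ∧ x - y = z - gammaStar z) ∧
    (∀ y : ℤ → I01 → ℝ, memGplus F F1 y → memGpp F y) :=
  stmt15_general F F1 hF1c hF1sub hF10 hF11 hhalf

end
end
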